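/- arXiv:2506.23954 — 4 statements merged into one kernel-verified Lean document; each statement's English description precedes it below -/
import Mathlib

section
/- Let k₀, k₁ : [0,C] → ℝ be continuous strictly increasing with k₁(t) < k₀(t) for all t ∈ (0,C] and k₀(0) = k₁(0). Let κ₁ < κ₀ with k₀(0) ≤ κ₁ and κ₀ ≤ min(k₀(C), k₁(C)). Then ∫_{κ₁}^{κ₀} k₀⁻¹(s) ds < ∫_{κ₁}^{κ₀} k₁⁻¹(s) ds. -/
open Set

/- The inverses `k₀⁻¹, k₁⁻¹` are strictly increasing, hence integrable, on `[κ₁, κ₀]`. For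
`s ∈ (κ₁, κ₀)` the point `t = k₀⁻¹ s` is positive, so `k₁ t < k₀ t = s = k₁ (k₁⁻¹ s)`, and
monotonicity of `k₁` gives `k₀⁻¹ s < k₁⁻¹ s`; a strict pointwise inequality on a nondegenerate
interval integrates to a strict one. -/

theorem StrictMonoOn.of_rightInvOn {α β : Type*} [LinearOrder α] [Preorder β]
    {f : α → β} {g : β → α} {s : Set α} {t : Set β} (hf : StrictMonoOn f s)
    (hg : MapsTo g t s) (hfg : RightInvOn g f t) : StrictMonoOn g t := by
  intro y hy y' hy' hlt
  rwa [← hf.lt_iff_lt (hg hy) (hg hy'), hfg.eq hy, hfg.eq hy']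

theorem intervalIntegral_lt_intervalIntegral_of_lt_on {f g : ℝ → ℝ} {a b : ℝ}
    (hf : IntervalIntegrable f MeasureTheory.volume a b)
    (hg : IntervalIntegrable g MeasureTheory.volume a b)
    (hlt : ∀ x ∈ Ioo a b, f x < g x) (hab : a < b) :
    (∫ x in a..b, f x) < ∫ x in a..b, g x := by
  have hpos := intervalIntegral.intervalIntegral_pos_of_pos_on (hg.sub hf)
    (fun x hx ↦ sub_pos.2 (hlt x hx)) hab
  rwa [intervalIntegral.integral_sub hg hf, sub_pos] at hpos

theorem MonotoneOn.intervalIntegrable_of_Icc {f : ℝ → ℝ} {a b : ℝ} (hab : a ≤ b)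
    (hf : MonotoneOn f (Icc a b)) : IntervalIntegrable f MeasureTheory.volume a b :=
  MonotoneOn.intervalIntegrable (uIcc_of_le hab ▸ hf)

theorem stmt_2_general (C : ℝ) (k₀ k₁ kinv₀ kinv₁ : ℝ → ℝ)
    (hk₀_mono : StrictMonoOn k₀ (Set.Icc 0 C))
    (hk₁_mono : StrictMonoOn k₁ (Set.Icc 0 C))
    (hlt : ∀ t ∈ Set.Ioc 0 C, k₁ t < k₀ t)
    (heq0 : k₀ 0 = k₁ 0)
    (hinv₀_right : ∀ s ∈ Set.Icc (k₀ 0) (k₀ C), kinv₀ s ∈ Set.Icc 0 C ∧ k₀ (kinv₀ s) = s)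
    (hinv₁_right : ∀ s ∈ Set.Icc (k₁ 0) (k₁ C), kinv₁ s ∈ Set.Icc 0 C ∧ k₁ (kinv₁ s) = s)
    (κ₀ κ₁ : ℝ) (hκ : κ₁ < κ₀) (hκ₁lb : k₀ 0 ≤ κ₁)
    (hκ₀ub : κ₀ ≤ min (k₀ C) (k₁ C)) :
    (∫ s in κ₁..κ₀, kinv₀ s) < ∫ s in κ₁..κ₀, kinv₁ s := by
  have hsub₀ : Icc κ₁ κ₀ ⊆ Icc (k₀ 0) (k₀ C) :=
    Icc_subset_Icc hκ₁lb (hκ₀ub.trans (min_le_left _ _))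
  have hsub₁ : Icc κ₁ κ₀ ⊆ Icc (k₁ 0) (k₁ C) :=
    Icc_subset_Icc (heq0 ▸ hκ₁lb) (hκ₀ub.trans (min_le_right _ _))
  have hmono₀ : StrictMonoOn kinv₀ (Icc κ₁ κ₀) := hk₀_mono.of_rightInvOn
    (fun s hs ↦ (hinv₀_right s (hsub₀ hs)).1) (fun s hs ↦ (hinv₀_right s (hsub₀ hs)).2)
  have hmono₁ : StrictMonoOn kinv₁ (Icc κ₁ κ₀) := hk₁_mono.of_rightInvOn
    (fun s hs ↦ (hinv₁_right s (hsub₁ hs)).1) (fun s hs ↦ (hinv₁_right s (hsub₁ hs)).2)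
  refine intervalIntegral_lt_intervalIntegral_of_lt_on
    (hmono₀.monotoneOn.intervalIntegrable_of_Icc hκ.le)
    (hmono₁.monotoneOn.intervalIntegrable_of_Icc hκ.le) (fun s hs ↦ ?_) hκ
  obtain ⟨ht₀, hs₀⟩ := hinv₀_right s (hsub₀ (Ioo_subset_Icc_self hs))
  obtain ⟨ht₁, hs₁⟩ := hinv₁_right s (hsub₁ (Ioo_subset_Icc_self hs))
  have hpos : 0 < kinv₀ s := ht₀.1.lt_of_ne fun h ↦ by
    rw [← h] at hs₀
    linarith [hs.1]
  rw [← hk₁_mono.lt_iff_lt ht₀ ht₁, hs₁]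
  simpa only [hs₀] using hlt _ ⟨hpos, ht₀.2⟩

/-- With `k₁ < k₀` on `(0,C]` and equal values at `0`, the integral of `k₀⁻¹` over
`[κ₁, κ₀]` is strictly below the integral of `k₁⁻¹` over the same interval. -/
theorem stmt_2 (C : ℝ) (hC : 0 < C) (k₀ k₁ kinv₀ kinv₁ : ℝ → ℝ)
    (hk₀_cont : ContinuousOn k₀ (Set.Icc 0 C))
    (hk₁_cont : ContinuousOn k₁ (Set.Icc 0 C))
    (hk₀_mono : StrictMonoOn k₀ (Set.Icc 0 C))
    (hk₁_mono : StrictMonoOn k₁ (Set.Icc 0 C))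
    (hlt : ∀ t ∈ Set.Ioc 0 C, k₁ t < k₀ t)
    (heq0 : k₀ 0 = k₁ 0)
    (hinv₀_left : ∀ t ∈ Set.Icc 0 C, kinv₀ (k₀ t) = t)
    (hinv₀_right : ∀ s ∈ Set.Icc (k₀ 0) (k₀ C), kinv₀ s ∈ Set.Icc 0 C ∧ k₀ (kinv₀ s) = s)
    (hinv₁_left : ∀ t ∈ Set.Icc 0 C, kinv₁ (k₁ t) = t)
    (hinv₁_right : ∀ s ∈ Set.Icc (k₁ 0) (k₁ C), kinv₁ s ∈ Set.Icc 0 C ∧ k₁ (kinv₁ s) = s)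
    (κ₀ κ₁ : ℝ) (hκ : κ₁ < κ₀) (hκ₁lb : k₀ 0 ≤ κ₁)
    (hκ₀ub : κ₀ ≤ min (k₀ C) (k₁ C)) :
    (∫ s in κ₁..κ₀, kinv₀ s) < ∫ s in κ₁..κ₀, kinv₁ s :=
  stmt_2_general C k₀ k₁ kinv₀ kinv₁ hk₀_mono hk₁_mono hlt heq0 hinv₀_right hinv₁_right κ₀ κ₁ hκ
    hκ₁lb hκ₀ub
end

section
/- Let g : [a,b] → ℝ be bounded and measurable with concavification ĝ, and let K : [a,b] → ℝ be continuous and convex. Then sup { ∫ g dγ − K(∫ x dγ(x)) : γ a Borel probability measure on [a,b] } = max_{α ∈ [a,b]} ( ĝ(α) − K(α) ), provided g is continuous (so that ĝ(α) is attained by two-point measures). -/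
open MeasureTheory Set

/-!
Maximise the two-point payoff `t g(x) + (1 - t) g(y) - K(t x + (1 - t) y)` over the compact set
`[0,1] × [a,b] × [a,b]`, say with value `M` at a point whose mean is `α₀`. Then for every `α`, every
chord of the graph of `g` above `α` lies below `M + K(α)`. For interior `α` this yields a line of
height `M + K(α)` at `α` lying above `g` (take its slope between the secant slopes to the left and
to the right of `α`); at an endpoint the constant `max g` lowered to `M + K(α)` at `α` is a concave
majorant, and a measure with mean `α` is a Dirac mass. Either way `ĝ(α) ≤ M + K(α)` and
`∫ g dγ ≤ M + K(∫ x dγ)`, while concavity of every majorant gives `ĝ(α₀) ≥ M + K(α₀)` and the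
two-point measure at the maximiser attains `M`.
-/

noncomputable def concavification (g : ℝ → ℝ) (s : Set ℝ) (x : ℝ) : ℝ :=
  sInf {y : ℝ | ∃ u : ℝ → ℝ, ConcaveOn ℝ s u ∧ (∀ z ∈ s, g z ≤ u z) ∧ y = u x}

section Concavification

variable {g u : ℝ → ℝ} {s : Set ℝ}

theorem concavification_le {x : ℝ} (hx : x ∈ s) (hu : ConcaveOn ℝ s u)
    (hgu : ∀ z ∈ s, g z ≤ u z) : concavification g s x ≤ u x :=
  csInf_le ⟨g x, by rintro _ ⟨v, -, hgv, rfl⟩; exact hgv x hx⟩ ⟨u, hu, hgu, rfl⟩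

theorem le_concavification (hs : Convex ℝ s) (hg : BddAbove (g '' s)) {t x y : ℝ}
    (ht : t ∈ Icc (0 : ℝ) 1) (hx : x ∈ s) (hy : y ∈ s) :
    t * g x + (1 - t) * g y ≤ concavification g s (t * x + (1 - t) * y) := by
  obtain ⟨C, hC⟩ := hg
  refine le_csInf ⟨C, fun _ => C, concaveOn_const C hs, fun z hz => hC ⟨z, hz, rfl⟩, rfl⟩ ?_
  rintro _ ⟨v, hv, hgv, rfl⟩
  have ht' : 0 ≤ 1 - t := sub_nonneg.2 ht.2
  calc t * g x + (1 - t) * g y ≤ t * v x + (1 - t) * v y := by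
        gcongr
        exacts [ht.1, hgv x hx, hgv y hy]
    _ ≤ v (t * x + (1 - t) * y) := hv.2 hx hy ht.1 ht' (by ring)

end Concavification

theorem concaveOn_update_const_of_endpoint {a b m E C : ℝ} (hm : m = a ∨ m = b) (hEC : E ≤ C) :
    ConcaveOn ℝ (Icc a b) (Function.update (fun _ => C) m E) := by
  refine ⟨convex_Icc a b, fun x hx y hy s t hs ht hst => ?_⟩
  set u := Function.update (fun _ : ℝ => C) m E
  have hu : ∀ z, u z ≤ C := fun z => by
    by_cases hz : z = m
    · simp [u, hz, hEC]
    · simp [u, hz]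
  simp only [smul_eq_mul]
  by_cases hmid : s * x + t * y = m
  · have hsplit : s * (x - m) = 0 ∧ t * (y - m) = 0 := by
      have hsum : s * (x - m) + t * (y - m) = 0 := by linear_combination hmid - m * hst
      rcases hm with rfl | rfl
      · have := mul_nonneg hs (sub_nonneg.2 hx.1)
        have := mul_nonneg ht (sub_nonneg.2 hy.1)
        constructor <;> linarith
      · have := mul_nonneg hs (sub_nonneg.2 hx.2)
        have := mul_nonneg ht (sub_nonneg.2 hy.2)
        constructor <;> linarith
    have hweight : ∀ r z, r * (z - m) = 0 → r * u z = r * E := fun r z hrz => by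
      rcases mul_eq_zero.1 hrz with rfl | hz
      · ring
      · simp [u, sub_eq_zero.1 hz]
    rw [hweight s x hsplit.1, hweight t y hsplit.2, hmid, ← add_mul, hst]
    simp [u]
  · calc s * u x + t * u y ≤ s * C + t * C := by gcongr <;> exact hu _
      _ = u (s * x + t * y) := by simp [u, hmid, ← add_mul, hst]

theorem ContinuousOn.integrable_of_ae_mem_Icc {f : ℝ → ℝ} {a b : ℝ} {μ : Measure ℝ}
    [IsFiniteMeasure μ] (hf : ContinuousOn f (Icc a b)) (hμ : ∀ᵐ x ∂μ, x ∈ Icc a b) :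
    Integrable f μ := by
  rw [← Measure.restrict_eq_self_of_ae_mem hμ]
  exact hf.integrableOn_Icc

theorem ae_eq_of_integral_id_eq_endpoint {a b m : ℝ} {μ : Measure ℝ} [IsProbabilityMeasure μ]
    (hμ : ∀ᵐ x ∂μ, x ∈ Icc a b) (hmean : ∫ x, x ∂μ = m) (hend : m = a ∨ m = b) :
    ∀ᵐ x ∂μ, x = m := by
  have hid : Integrable (fun x => x) μ := continuousOn_id.integrable_of_ae_mem_Icc hμ
  rcases hend with rfl | rfl
  · have := (integral_eq_iff_of_ae_le (integrable_const _) hid (hμ.mono fun x hx => hx.1)).1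
      (by simp [hmean])
    exact this.mono fun x hx => hx.symm
  · exact (integral_eq_iff_of_ae_le hid (integrable_const _) (hμ.mono fun x hx => hx.2)).1
      (by simp [hmean])

def ChordsBelow (g : ℝ → ℝ) (s : Set ℝ) (m E : ℝ) : Prop :=
  ∀ x ∈ s, ∀ y ∈ s, ∀ t ∈ Icc (0 : ℝ) 1, t * x + (1 - t) * y = m →
    t * g x + (1 - t) * g y ≤ E

namespace ChordsBelow

variable {g : ℝ → ℝ} {a b m E : ℝ}

theorem apply_le {s : Set ℝ} (h : ChordsBelow g s m E) (hm : m ∈ s) : g m ≤ E := by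
  simpa using h m hm m hm 1 ⟨zero_le_one, le_rfl⟩ (by ring)

theorem slope_le (h : ChordsBelow g (Icc a b) m E) {x y : ℝ} (hx : x ∈ Icc a b)
    (hy : y ∈ Icc a b) (hxm : x < m) (hmy : m < y) :
    (g y - E) / (y - m) ≤ (E - g x) / (m - x) := by
  have hyx : 0 < y - x := by linarith
  have hchord := h x hx y hy ((y - m) / (y - x))
    ⟨div_nonneg (by linarith) hyx.le, (div_le_one hyx).2 (by linarith)⟩
    (by field_simp; ring)
  rw [show (y - m) / (y - x) * g x + (1 - (y - m) / (y - x)) * g y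
      = ((y - m) * g x + (m - x) * g y) / (y - x) by field_simp; ring,
    div_le_iff₀ hyx] at hchord
  rw [div_le_div_iff₀ (by linarith) (by linarith)]
  linarith

theorem exists_affine_majorant (h : ChordsBelow g (Icc a b) m E) (ham : a < m) (hmb : m < b) :
    ∃ c, ∀ z ∈ Icc a b, g z ≤ E + c * (z - m) := by
  set R := (fun y => (g y - E) / (y - m)) '' Ioc m b
  have hR : BddAbove R := ⟨(E - g a) / (m - a), by
    rintro _ ⟨y, hy, rfl⟩
    exact h.slope_le (left_mem_Icc.2 (ham.trans hmb).le) ⟨by linarith [hy.1], hy.2⟩ ham hy.1⟩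
  refine ⟨sSup R, fun z hz => ?_⟩
  rcases lt_trichotomy z m with hzm | rfl | hmz
  · have : sSup R ≤ (E - g z) / (m - z) :=
      csSup_le ⟨_, mem_image_of_mem _ ⟨hmb, le_rfl⟩⟩ <| by
        rintro _ ⟨y, hy, rfl⟩
        exact h.slope_le hz ⟨by linarith [hy.1], hy.2⟩ hzm hy.1
    rw [le_div_iff₀ (sub_pos.2 hzm)] at this
    linarith
  · simpa using h.apply_le hz
  · have : (g z - E) / (z - m) ≤ sSup R := le_csSup hR ⟨z, ⟨hmz, hz.2⟩, rfl⟩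
    rw [div_le_iff₀ (sub_pos.2 hmz)] at this
    linarith

theorem exists_concaveOn_majorant (h : ChordsBelow g (Icc a b) m E) (hm : m ∈ Icc a b)
    (hg : BddAbove (g '' Icc a b)) :
    ∃ u, ConcaveOn ℝ (Icc a b) u ∧ (∀ z ∈ Icc a b, g z ≤ u z) ∧ u m ≤ E := by
  by_cases hend : m = a ∨ m = b
  · obtain ⟨C, hC⟩ := hg
    refine ⟨Function.update (fun _ => max C E) m E,
      concaveOn_update_const_of_endpoint hend (le_max_right C E), fun z hz => ?_, by simp⟩
    by_cases hzm : z = m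
    · simpa [hzm] using h.apply_le (hzm ▸ hz)
    · simpa [hzm] using Or.inl (hC ⟨z, hz, rfl⟩)
  obtain ⟨hma, hmb⟩ := not_or.1 hend
  obtain ⟨c, hc⟩ := h.exists_affine_majorant (lt_of_le_of_ne hm.1 (Ne.symm hma))
    (lt_of_le_of_ne hm.2 hmb)
  refine ⟨fun z => E + c * (z - m), ⟨convex_Icc a b, fun x _ y _ s t _ _ hst => ?_⟩, hc, by simp⟩
  simp only [smul_eq_mul]
  linear_combination (E - c * m) * hst

theorem integral_le {γ : Measure ℝ} [IsProbabilityMeasure γ] (h : ChordsBelow g (Icc a b) m E)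
    (hγ : ∀ᵐ x ∂γ, x ∈ Icc a b) (hg : Integrable g γ) (hmean : ∫ x, x ∂γ = m) :
    ∫ x, g x ∂γ ≤ E := by
  have hid : Integrable (fun x => x) γ := continuousOn_id.integrable_of_ae_mem_Icc hγ
  have hm : m ∈ Icc a b := hmean ▸ (convex_Icc a b).integral_mem isClosed_Icc hγ hid
  by_cases hend : m = a ∨ m = b
  · have hconst := ae_eq_of_integral_id_eq_endpoint hγ hmean hend
    rw [integral_congr_ae (hconst.mono fun x hx => congrArg g hx)]
    simpa using h.apply_le hm
  obtain ⟨hma, hmb⟩ := not_or.1 hend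
  obtain ⟨c, hc⟩ := h.exists_affine_majorant (lt_of_le_of_ne hm.1 (Ne.symm hma))
    (lt_of_le_of_ne hm.2 hmb)
  have hline : Integrable (fun x => c * (x - m)) γ := (hid.sub (integrable_const m)).const_mul c
  calc ∫ x, g x ∂γ ≤ ∫ x, (E + c * (x - m)) ∂γ :=
        integral_mono_ae hg ((integrable_const E).add hline) (hγ.mono hc)
    _ = E := by
        rw [integral_add (integrable_const E) hline, integral_const_mul,
          integral_sub hid (integrable_const m), hmean]
        simp

end ChordsBelow

noncomputable def twoPointMeasure {α : Type*} [MeasurableSpace α] (t : ℝ) (x y : α) : Measure α :=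
  ENNReal.ofReal t • Measure.dirac x + ENNReal.ofReal (1 - t) • Measure.dirac y

section TwoPointMeasure

variable {α : Type*} [MeasurableSpace α] {t : ℝ} {x y : α}

theorem twoPointMeasure_apply_of_mem (ht : t ∈ Icc (0 : ℝ) 1) {s : Set α} (hx : x ∈ s)
    (hy : y ∈ s) : twoPointMeasure t x y s = 1 := by
  simp only [twoPointMeasure, Measure.add_apply, Measure.smul_apply,
    Measure.dirac_apply_of_mem hx, Measure.dirac_apply_of_mem hy, smul_eq_mul, mul_one]
  rw [← ENNReal.ofReal_add ht.1 (sub_nonneg.2 ht.2)]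
  simp

theorem isProbabilityMeasure_twoPointMeasure (ht : t ∈ Icc (0 : ℝ) 1) :
    IsProbabilityMeasure (twoPointMeasure t x y) :=
  ⟨twoPointMeasure_apply_of_mem ht (mem_univ x) (mem_univ y)⟩

theorem integral_twoPointMeasure [MeasurableSingletonClass α] (ht : t ∈ Icc (0 : ℝ) 1)
    (f : α → ℝ) : ∫ z, f z ∂twoPointMeasure t x y = t * f x + (1 - t) * f y := by
  rw [twoPointMeasure, integral_add_measure, integral_smul_measure, integral_smul_measure,
    integral_dirac, integral_dirac, ENNReal.toReal_ofReal ht.1,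
    ENNReal.toReal_ofReal (sub_nonneg.2 ht.2), smul_eq_mul, smul_eq_mul]
  all_goals exact (integrable_dirac enorm_lt_top).smul_measure ENNReal.ofReal_ne_top

end TwoPointMeasure

theorem exists_forall_ge_chord_payoff {s : Set ℝ} (hs : Convex ℝ s) (hsc : IsCompact s)
    (hne : s.Nonempty) {g K : ℝ → ℝ} (hg : ContinuousOn g s) (hK : ContinuousOn K s) :
    ∃ t₀ ∈ Icc (0 : ℝ) 1, ∃ x₀ ∈ s, ∃ y₀ ∈ s, ∀ t ∈ Icc (0 : ℝ) 1, ∀ x ∈ s, ∀ y ∈ s,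
      t * g x + (1 - t) * g y - K (t * x + (1 - t) * y)
        ≤ t₀ * g x₀ + (1 - t₀) * g y₀ - K (t₀ * x₀ + (1 - t₀) * y₀) := by
  set T := Icc (0 : ℝ) 1 ×ˢ s ×ˢ s
  have hT : IsCompact T := isCompact_Icc.prod (hsc.prod hsc)
  have hTne : T.Nonempty := ⟨(1, hne.some, hne.some), ⟨zero_le_one, le_rfl⟩, hne.some_mem,
    hne.some_mem⟩
  have hg₁ : ContinuousOn (fun p : ℝ × ℝ × ℝ => g p.2.1) T :=
    hg.comp (by fun_prop) fun p hp => hp.2.1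
  have hg₂ : ContinuousOn (fun p : ℝ × ℝ × ℝ => g p.2.2) T :=
    hg.comp (by fun_prop) fun p hp => hp.2.2
  have hK' : ContinuousOn (fun p : ℝ × ℝ × ℝ => K (p.1 * p.2.1 + (1 - p.1) * p.2.2)) T :=
    hK.comp (by fun_prop) fun p hp => hs hp.2.1 hp.2.2 hp.1.1 (sub_nonneg.2 hp.1.2) (by ring)
  obtain ⟨⟨t₀, x₀, y₀⟩, ⟨ht₀, hx₀, hy₀⟩, hmax⟩ := hT.exists_isMaxOn hTne
    (f := fun p => p.1 * g p.2.1 + (1 - p.1) * g p.2.2 - K (p.1 * p.2.1 + (1 - p.1) * p.2.2))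
    (((continuousOn_fst.mul hg₁).add ((continuousOn_const.sub continuousOn_fst).mul hg₂)).sub hK')
  exact ⟨t₀, ht₀, x₀, hx₀, y₀, hy₀, fun t ht x hx y hy =>
    hmax (show (t, x, y) ∈ T from ⟨ht, hx, hy⟩)⟩

theorem stmt_5_general (a b : ℝ) (hab : a < b) (g ghat K : ℝ → ℝ)
    (hg_cont : ContinuousOn g (Set.Icc a b))
    (hghat : ∀ x ∈ Set.Icc a b,
      ghat x = sInf {y : ℝ | ∃ u : ℝ → ℝ, ConcaveOn ℝ (Set.Icc a b) u ∧
        (∀ z ∈ Set.Icc a b, g z ≤ u z) ∧ y = u x})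
    (hK_cont : ContinuousOn K (Set.Icc a b)) :
    ∃ α₀ ∈ Set.Icc a b,
      (∀ α ∈ Set.Icc a b, ghat α - K α ≤ ghat α₀ - K α₀) ∧
      IsGreatest {r : ℝ | ∃ γ : Measure ℝ, IsProbabilityMeasure γ ∧
          γ (Set.Icc a b) = 1 ∧ r = (∫ x, g x ∂γ) - K (∫ x, x ∂γ)}
        (ghat α₀ - K α₀) := by
  have hgbdd : BddAbove (g '' Icc a b) := isCompact_Icc.bddAbove_image hg_cont
  obtain ⟨t₀, ht₀, x₀, hx₀, y₀, hy₀, hmax⟩ :=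
    exists_forall_ge_chord_payoff (convex_Icc a b) isCompact_Icc (nonempty_Icc.2 hab.le) hg_cont
      hK_cont
  set α₀ := t₀ * x₀ + (1 - t₀) * y₀
  set M := t₀ * g x₀ + (1 - t₀) * g y₀ - K α₀
  have hα₀ : α₀ ∈ Icc a b := convex_Icc a b hx₀ hy₀ ht₀.1 (sub_nonneg.2 ht₀.2) (by ring)
  have hchords : ∀ α, ChordsBelow g (Icc a b) α (M + K α) := by
    rintro α x hx y hy t ht rfl
    linarith [hmax t ht x hx y hy]
  have hghat_le : ∀ α ∈ Icc a b, ghat α ≤ M + K α := fun α hα => by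
    obtain ⟨u, hu, hgu, huα⟩ := (hchords α).exists_concaveOn_majorant hα hgbdd
    exact (hghat α hα).trans_le ((concavification_le hα hu hgu).trans huα)
  have hghat_α₀ : ghat α₀ = M + K α₀ := by
    refine le_antisymm (hghat_le α₀ hα₀) ?_
    have := le_concavification (convex_Icc a b) hgbdd ht₀ hx₀ hy₀
    rw [hghat α₀ hα₀]
    exact le_of_eq_of_le (by ring) this
  refine ⟨α₀, hα₀, fun α hα => by linarith [hghat_le α hα], ⟨twoPointMeasure t₀ x₀ y₀,
    isProbabilityMeasure_twoPointMeasure ht₀, twoPointMeasure_apply_of_mem ht₀ hx₀ hy₀, ?_⟩, ?_⟩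
  · rw [integral_twoPointMeasure ht₀, integral_twoPointMeasure ht₀, hghat_α₀]
    ring
  · rintro _ ⟨γ, hγ, hγI, rfl⟩
    have hγI' : ∀ᵐ x ∂γ, x ∈ Icc a b :=
      (ae_mem_iff_measure_eq measurableSet_Icc.nullMeasurableSet).2 (by rw [hγI, measure_univ])
    have := (hchords _).integral_le hγI' (hg_cont.integrable_of_ae_mem_Icc hγI') rfl
    linarith

/-- The agent's value `sup_γ (∫ g dγ − K(∫ x dγ))` over Borel probability measures on `[a,b]`
equals `max_{α ∈ [a,b]} (ĝ(α) − K(α))`, where `ĝ` is the concavification of the continuous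
contract `g` and `K` is continuous and convex. -/
theorem stmt_5 (a b : ℝ) (hab : a < b) (g ghat K : ℝ → ℝ)
    (hg_cont : ContinuousOn g (Set.Icc a b))
    (hghat : ∀ x ∈ Set.Icc a b,
      ghat x = sInf {y : ℝ | ∃ u : ℝ → ℝ, ConcaveOn ℝ (Set.Icc a b) u ∧
        (∀ z ∈ Set.Icc a b, g z ≤ u z) ∧ y = u x})
    (hK_cont : ContinuousOn K (Set.Icc a b))
    (hK_conv : ConvexOn ℝ (Set.Icc a b) K) :
    ∃ α₀ ∈ Set.Icc a b,
      (∀ α ∈ Set.Icc a b, ghat α - K α ≤ ghat α₀ - K α₀) ∧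
      IsGreatest {r : ℝ | ∃ γ : Measure ℝ, IsProbabilityMeasure γ ∧
          γ (Set.Icc a b) = 1 ∧ r = (∫ x, g x ∂γ) - K (∫ x, x ∂γ)}
        (ghat α₀ - K α₀) :=
  stmt_5_general a b hab g ghat K hg_cont hghat hK_cont
end

section
/- Let K₀, K₁ : [0,C] → ℝ be continuously differentiable and strictly convex with K₀(0) = K₁(0) = 0, K₀'(0) = K₁'(0), and K₀'(t) > K₁'(t) for t ∈ (0,C]. Let α₀, α₁ ∈ [0,C] with κ₀ := K₀'(α₀) > κ₁ := K₁'(α₁), and suppose there exist α₀¹, α₁⁰ ∈ [0,C] with K₀'(α₀¹) = κ₁ and K₁'(α₁⁰) = κ₀. Then (κ₀·α₀ − K₀(α₀)) − (κ₁·α₀¹ − K₀(α₀¹)) < (κ₀·α₁⁰ − K₁(α₁⁰)) − (κ₁·α₁ − K₁(α₁)). -/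
open Set

/-!
For convex `K`, the rent `t ↦ κ t - K t` is maximised where `K' = κ`, strictly so if `K` is
strictly convex. The larger side of the claim holds the rents at the optimal outputs `a01` and
`a10`; bounding them below by the rents at other outputs leaves an elementary inequality.
If `α₁ ≤ α₀`, use `α₀` for `K₁` (strictly suboptimal, as `K₁'(α₀) < κ₀`) and `α₁` for `K₀`:
what remains is the monotonicity of `K₀ - K₁`. If `α₀ < α₁`, exchange them: what remains is
`(κ₀ - κ₁)(α₁ - α₀) > 0`.
-/

namespace ConvexOn

variable {S : Set ℝ} {f : ℝ → ℝ} {κ a t : ℝ}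

theorem mul_sub_le_of_hasDerivWithinAt (hf : ConvexOn ℝ S f) (ha : a ∈ S) (ht : t ∈ S)
    (hf' : HasDerivWithinAt f κ S a) : κ * t - f t ≤ κ * a - f a := by
  rcases lt_trichotomy t a with hta | rfl | hat
  · have := hf.slope_le_of_hasDerivWithinAt ht ha hta hf'
    rw [slope_def_field, div_le_iff₀ (sub_pos.2 hta)] at this
    linarith
  · rfl
  · have := hf.le_slope_of_hasDerivWithinAt ha ht hat hf'
    rw [slope_def_field, le_div_iff₀ (sub_pos.2 hat)] at this
    linarith

end ConvexOn

namespace StrictConvexOn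

variable {S : Set ℝ} {f : ℝ → ℝ} {κ a t : ℝ}

theorem mul_sub_lt_of_hasDerivWithinAt (hf : StrictConvexOn ℝ S f) (ha : a ∈ S) (ht : t ∈ S)
    (hta : t ≠ a) (hf' : HasDerivWithinAt f κ S a) : κ * t - f t < κ * a - f a := by
  rcases hta.lt_or_gt with hta | hat
  · have := hf.slope_lt_of_hasDerivWithinAt ht ha hta hf'
    rw [slope_def_field, div_lt_iff₀ (sub_pos.2 hta)] at this
    linarith
  · have := hf.lt_slope_of_hasDerivWithinAt ha ht hat hf'
    rw [slope_def_field, lt_div_iff₀ (sub_pos.2 hat)] at this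
    linarith

end StrictConvexOn

theorem monotoneOn_sub_of_hasDerivWithinAt {f g f' g' : ℝ → ℝ} {a b : ℝ}
    (hf : ∀ t ∈ Icc a b, HasDerivWithinAt f (f' t) (Icc a b) t)
    (hg : ∀ t ∈ Icc a b, HasDerivWithinAt g (g' t) (Icc a b) t)
    (hle : ∀ t ∈ Ioo a b, g' t ≤ f' t) : MonotoneOn (f - g) (Icc a b) := by
  have hfg : ∀ t ∈ Icc a b, HasDerivWithinAt (f - g) (f' t - g' t) (Icc a b) t :=
    fun t ht => (hf t ht).sub (hg t ht)
  refine monotoneOn_of_hasDerivWithinAt_nonneg (f' := f' - g') (convex_Icc a b)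
    (fun t ht => (hfg t ht).continuousWithinAt) (fun t ht => ?_) (fun t ht => ?_)
  · exact (hfg t (interior_subset ht)).mono interior_subset
  · rw [interior_Icc] at ht
    exact sub_nonneg.2 (hle t ht)

theorem stmt_11_general (C : ℝ) (K₀ K₁ k₀ k₁ : ℝ → ℝ)
    (hK₀ : ∀ t ∈ Set.Icc 0 C, HasDerivWithinAt K₀ (k₀ t) (Set.Icc 0 C) t)
    (hK₁ : ∀ t ∈ Set.Icc 0 C, HasDerivWithinAt K₁ (k₁ t) (Set.Icc 0 C) t)
    (hK₀_conv : StrictConvexOn ℝ (Set.Icc 0 C) K₀)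
    (hK₁_conv : StrictConvexOn ℝ (Set.Icc 0 C) K₁)
    (heq0 : k₀ 0 = k₁ 0)
    (hlt : ∀ t ∈ Set.Ioc 0 C, k₁ t < k₀ t)
    (α₀ α₁ : ℝ) (hα₀ : α₀ ∈ Set.Icc 0 C) (hα₁ : α₁ ∈ Set.Icc 0 C)
    (hκ : k₁ α₁ < k₀ α₀)
    (a01 a10 : ℝ) (ha01 : a01 ∈ Set.Icc 0 C) (ha10 : a10 ∈ Set.Icc 0 C)
    (h01 : k₀ a01 = k₁ α₁) (h10 : k₁ a10 = k₀ α₀) :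
    (k₀ α₀ * α₀ - K₀ α₀) - (k₁ α₁ * a01 - K₀ a01)
      < (k₀ α₀ * a10 - K₁ a10) - (k₁ α₁ * α₁ - K₁ α₁) := by
  have hopt₀ : ∀ t ∈ Icc 0 C, k₁ α₁ * t - K₀ t ≤ k₁ α₁ * a01 - K₀ a01 := fun t ht =>
    hK₀_conv.convexOn.mul_sub_le_of_hasDerivWithinAt ha01 ht (h01 ▸ hK₀ a01 ha01)
  have hopt₁ : ∀ t ∈ Icc 0 C, k₀ α₀ * t - K₁ t ≤ k₀ α₀ * a10 - K₁ a10 := fun t ht =>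
    hK₁_conv.convexOn.mul_sub_le_of_hasDerivWithinAt ha10 ht (h10 ▸ hK₁ a10 ha10)
  rcases le_or_gt α₁ α₀ with hα | hα
  · have hne : α₀ ≠ a10 := by
      rintro rfl
      rcases hα₀.1.eq_or_lt with rfl | hpos
      · obtain rfl : α₁ = 0 := le_antisymm hα hα₁.1
        exact hκ.ne heq0.symm
      · exact (hlt α₀ ⟨hpos, hα₀.2⟩).ne h10
    have hrent₁ : k₀ α₀ * α₀ - K₁ α₀ < k₀ α₀ * a10 - K₁ a10 :=
      hK₁_conv.mul_sub_lt_of_hasDerivWithinAt ha10 hα₀ hne (h10 ▸ hK₁ a10 ha10)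
    have hD : K₀ α₁ - K₁ α₁ ≤ K₀ α₀ - K₁ α₀ := monotoneOn_sub_of_hasDerivWithinAt hK₀ hK₁
      (fun t ht => (hlt t (Ioo_subset_Ioc_self ht)).le) hα₁ hα₀ hα
    linarith [hopt₀ α₁ hα₁]
  · nlinarith [hopt₀ α₀ hα₀, hopt₁ α₁ hα₁, mul_pos (sub_pos.2 hκ) (sub_pos.2 hα)]

/-- Two full-range contracts with distinct powers `κ₀ = K₀'(α₀) > κ₁ = K₁'(α₁)` violate joint
incentive compatibility: the low type's rent difference `∫_{κ₁}^{κ₀} (K₀')⁻¹` is strictly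
below the high type's rent difference `∫_{κ₁}^{κ₀} (K₁')⁻¹`. -/
theorem stmt_11 (C : ℝ) (hC : 0 < C) (K₀ K₁ k₀ k₁ : ℝ → ℝ)
    (hK₀ : ∀ t ∈ Set.Icc 0 C, HasDerivWithinAt K₀ (k₀ t) (Set.Icc 0 C) t)
    (hK₁ : ∀ t ∈ Set.Icc 0 C, HasDerivWithinAt K₁ (k₁ t) (Set.Icc 0 C) t)
    (hk₀_cont : ContinuousOn k₀ (Set.Icc 0 C))
    (hk₁_cont : ContinuousOn k₁ (Set.Icc 0 C))
    (hK₀_conv : StrictConvexOn ℝ (Set.Icc 0 C) K₀)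
    (hK₁_conv : StrictConvexOn ℝ (Set.Icc 0 C) K₁)
    (hK₀0 : K₀ 0 = 0) (hK₁0 : K₁ 0 = 0)
    (heq0 : k₀ 0 = k₁ 0)
    (hlt : ∀ t ∈ Set.Ioc 0 C, k₁ t < k₀ t)
    (α₀ α₁ : ℝ) (hα₀ : α₀ ∈ Set.Icc 0 C) (hα₁ : α₁ ∈ Set.Icc 0 C)
    (hκ : k₁ α₁ < k₀ α₀)
    (a01 a10 : ℝ) (ha01 : a01 ∈ Set.Icc 0 C) (ha10 : a10 ∈ Set.Icc 0 C)
    (h01 : k₀ a01 = k₁ α₁) (h10 : k₁ a10 = k₀ α₀) :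
    (k₀ α₀ * α₀ - K₀ α₀) - (k₁ α₁ * a01 - K₀ a01)
      < (k₀ α₀ * a10 - K₁ a10) - (k₁ α₁ * α₁ - K₁ α₁) :=
  stmt_11_general C K₀ K₁ k₀ k₁ hK₀ hK₁ hK₀_conv hK₁_conv heq0 hlt α₀ α₁ hα₀ hα₁ hκ a01 a10 ha01
    ha10 h01 h10
end

section
/- Let Θ : [0,C] → ℝ be concave and differentiable, and K : [0,C] → ℝ twice differentiable, strictly increasing, with K''(t) > 0 for all t. Suppose α* ∈ [0,C] maximizes α ↦ Θ(α) − K'(α)·α over [0,C], and α** ∈ [0,C) maximizes α ↦ Θ(α) − K(α) over [0,C]. Then α* ≤ α**. -/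
/-!
Revealed preference: if `α** < α*`, comparing the two objectives at the two points gives
`k α* · α* − k α** · α** ≤ K α* − K α**`. Since `k = K'` is strictly increasing, the chord of `K`
is strictly below its slope at the right end, `K α* − K α** < k α* · (α* − α**)`, so
`k α* · α** < k α** · α**`, which is impossible for `α** ≥ 0`.
-/

open Set

theorem sub_lt_mul_sub_of_hasDerivWithinAt_of_strictMonoOn {f f' : ℝ → ℝ} {a b : ℝ} (hab : a < b)
    (hf : ∀ x ∈ Icc a b, HasDerivWithinAt f (f' x) (Icc a b) x)
    (hf' : StrictMonoOn f' (Icc a b)) :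
    f b - f a < f' b * (b - a) := by
  obtain ⟨c, hc, hslope⟩ := exists_hasDerivAt_eq_slope f f' hab
    (fun x hx => (hf x hx).continuousWithinAt)
    (fun x hx => (hf x (Ioo_subset_Icc_self hx)).hasDerivAt (Icc_mem_nhds hx.1 hx.2))
  rw [eq_div_iff (sub_pos.2 hab).ne'] at hslope
  rw [← hslope]
  exact mul_lt_mul_of_pos_right
    (hf' (Ioo_subset_Icc_self hc) (right_mem_Icc.2 hab.le) hc.2) (sub_pos.2 hab)

theorem stmt_15_general (C : ℝ) (Θ K k k' : ℝ → ℝ)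
    (hK : ∀ t ∈ Set.Icc 0 C, HasDerivWithinAt K (k t) (Set.Icc 0 C) t)
    (hk : ∀ t ∈ Set.Icc 0 C, HasDerivWithinAt k (k' t) (Set.Icc 0 C) t)
    (hk'_pos : ∀ t ∈ Set.Icc 0 C, 0 < k' t)
    (αstar αfb : ℝ)
    (hαstar_mem : αstar ∈ Set.Icc 0 C)
    (hαstar : IsMaxOn (fun α => Θ α - k α * α) (Set.Icc 0 C) αstar)
    (hαfb_mem : αfb ∈ Set.Ico 0 C)
    (hαfb : IsMaxOn (fun α => Θ α - K α) (Set.Icc 0 C) αfb) :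
    αstar ≤ αfb := by
  by_contra! hlt
  have hαfb_mem' : αfb ∈ Icc 0 C := Ico_subset_Icc_self hαfb_mem
  have hsub : Icc αfb αstar ⊆ Icc 0 C := Icc_subset_Icc hαfb_mem'.1 hαstar_mem.2
  have hk_mono : StrictMonoOn k (Icc 0 C) :=
    strictMonoOn_of_hasDerivWithinAt_pos (convex_Icc 0 C) (fun x hx => (hk x hx).continuousWithinAt)
      (fun x hx => (hk x (interior_subset hx)).mono interior_subset)
      (fun x hx => hk'_pos x (interior_subset hx))
  have hchord : K αstar - K αfb < k αstar * (αstar - αfb) :=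
    sub_lt_mul_sub_of_hasDerivWithinAt_of_strictMonoOn hlt
      (fun x hx => (hK x (hsub hx)).mono hsub) (hk_mono.mono hsub)
  have hk_le : k αfb * αfb ≤ k αstar * αfb :=
    mul_le_mul_of_nonneg_right (hk_mono hαfb_mem' hαstar_mem hlt).le hαfb_mem'.1
  have hstar_ge : Θ αfb - k αfb * αfb ≤ Θ αstar - k αstar * αstar := hαstar hαfb_mem'
  have hfb_ge : Θ αstar - K αstar ≤ Θ αfb - K αfb := hαfb hαstar_mem
  linarith

/-- The pure moral hazard effort `α*` (maximizing `Θ(α) − K'(α)·α`) is weakly below the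
first-best effort `α**` (maximizing `Θ(α) − K(α)`, attained in `[0,C)`), for concave
differentiable `Θ` and twice differentiable strictly increasing `K` with `K'' > 0`. -/
theorem stmt_15 (C : ℝ) (hC : 0 < C) (Θ K k k' : ℝ → ℝ)
    (hΘ_conc : ConcaveOn ℝ (Set.Icc 0 C) Θ)
    (hΘ_diff : ∀ t ∈ Set.Icc 0 C, DifferentiableWithinAt ℝ Θ (Set.Icc 0 C) t)
    (hK : ∀ t ∈ Set.Icc 0 C, HasDerivWithinAt K (k t) (Set.Icc 0 C) t)
    (hk : ∀ t ∈ Set.Icc 0 C, HasDerivWithinAt k (k' t) (Set.Icc 0 C) t)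
    (hK_mono : StrictMonoOn K (Set.Icc 0 C))
    (hk'_pos : ∀ t ∈ Set.Icc 0 C, 0 < k' t)
    (αstar αfb : ℝ)
    (hαstar_mem : αstar ∈ Set.Icc 0 C)
    (hαstar : IsMaxOn (fun α => Θ α - k α * α) (Set.Icc 0 C) αstar)
    (hαfb_mem : αfb ∈ Set.Ico 0 C)
    (hαfb : IsMaxOn (fun α => Θ α - K α) (Set.Icc 0 C) αfb) :
    αstar ≤ αfb :=
  stmt_15_general C Θ K k k' hK hk hk'_pos αstar αfb hαstar_mem hαstar hαfb_mem hαfb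
end
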